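/- Let R = μ₀R⁰ + Σ_{i=1}^m μᵢR^{Jᵢ} be a quasi-Clifford algebraic curvature tensor on a scalar product space (V,g). Suppose X ∈ V is nonnull, Y ∈ V satisfies 𝒥_X(Y) = ε_X·μ₀·Y, and the family (X, J₁X, …, J_mX) is linearly independent. Then μ₀·g(Y,X) = 0 and μᵢ·g(Y,JᵢX) = 0 for all 1 ≤ i ≤ m, and consequently 𝒥_Y(X) = ε_Y·μ₀·X, so X is an eigenvector of 𝒥_Y. -/

import Mathlib

open Module Finset

/-- The algebraic curvature tensor `R⁰` of constant sectional curvature one. -/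
def R0 {V : Type*} [AddCommGroup V] [Module ℝ V] (g : LinearMap.BilinForm ℝ V)
    (X Y Z W : V) : ℝ :=
  g Y Z * g X W - g X Z * g Y W

/-- The algebraic curvature tensor `R^J` generated by a `g`-skew-adjoint endomorphism `J`. -/
def RJ {V : Type*} [AddCommGroup V] [Module ℝ V] (g : LinearMap.BilinForm ℝ V)
    (J : V →ₗ[ℝ] V) (X Y Z W : V) : ℝ :=
  g (J X) Z * g (J Y) W - g (J Y) Z * g (J X) W + 2 * g (J X) Y * g (J Z) W

/-!
Since `g(JᵢX, X) = 0`, the Jacobi operator of `R = μ₀R⁰ + Σ μᵢR^{Jᵢ}` is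
`𝒥_X Y = μ₀ (ε_X Y - g(Y,X) X) - 3 Σ μᵢ g(Y,JᵢX) JᵢX`.
So `𝒥_X Y = ε_X μ₀ Y` says exactly that `μ₀ g(Y,X) X + Σ 3μᵢ g(Y,JᵢX) JᵢX = 0`, and linear
independence of `(X, J₁X, …, J_mX)` kills every coefficient. These are, up to sign and
symmetry of `g`, the coefficients of `X` and `JᵢY` in the same formula for `𝒥_Y X`,
which therefore collapses to `ε_Y μ₀ X`.
-/

theorem LinearIndependent.eq_zero_of_fin_cons_smul_add_sum
    {R M : Type*} [Ring R] [AddCommGroup M] [Module R M] {m : ℕ} {x : M} {v : Fin m → M}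
    (hli : LinearIndependent R (Fin.cons x v : Fin (m + 1) → M)) {a : R} {b : Fin m → R}
    (h : a • x + ∑ i, b i • v i = 0) : a = 0 ∧ ∀ i, b i = 0 := by
  have hcoeff := Fintype.linearIndependent_iff.mp hli (Fin.cons a b)
    (by simpa only [Fin.sum_univ_succ, Fin.cons_zero, Fin.cons_succ] using h)
  exact ⟨hcoeff 0, fun i => hcoeff i.succ⟩

section QuasiClifford

variable {V : Type*} [AddCommGroup V] [Module ℝ V]

def quasiCliffordTensor {ι : Type*} [Fintype ι] (g : LinearMap.BilinForm ℝ V) (μ₀ : ℝ)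
    (μ : ι → ℝ) (J : ι → V →ₗ[ℝ] V) (X Y Z W : V) : ℝ :=
  μ₀ * R0 g X Y Z W + ∑ i, μ i * RJ g (J i) X Y Z W

variable {g : LinearMap.BilinForm ℝ V}

theorem apply_self_eq_zero_of_skew (hsymm : ∀ x y, g x y = g y x) {J : V →ₗ[ℝ] V}
    (hskew : ∀ x y, g (J x) y = - g x (J y)) (x : V) : g (J x) x = 0 := by
  linarith [hskew x x, hsymm x (J x)]

theorem RJ_jacobi (hsymm : ∀ x y, g x y = g y x) {J : V →ₗ[ℝ] V}
    (hskew : ∀ x y, g (J x) y = - g x (J y)) (X Y Z : V) :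
    RJ g J Y X X Z = -(3 * g Y (J X) * g (J X) Z) := by
  rw [RJ, apply_self_eq_zero_of_skew hsymm hskew X, hskew Y X]
  ring

theorem quasiCliffordTensor_jacobi_eq {ι : Type*} [Fintype ι] (hsep : g.SeparatingLeft)
    (hsymm : ∀ x y, g x y = g y x) {μ₀ : ℝ} {μ : ι → ℝ} {J : ι → V →ₗ[ℝ] V}
    (hskew : ∀ i, ∀ x y : V, g (J i x) y = - g x (J i y)) {X : V} {JacX : V → V}
    (hJac : ∀ Y Z, g (JacX Y) Z = quasiCliffordTensor g μ₀ μ J Y X X Z) (Y : V) :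
    JacX Y = μ₀ • (g X X • Y - g Y X • X) - ∑ i, (3 * μ i * g Y (J i X)) • J i X := by
  rw [← sub_eq_zero]
  refine hsep _ fun Z => ?_
  simp only [map_sub, map_smul, map_sum, LinearMap.sub_apply, LinearMap.smul_apply,
    LinearMap.sum_apply, smul_eq_mul, hJac, quasiCliffordTensor, R0,
    RJ_jacobi hsymm (hskew _), mul_neg, Finset.sum_neg_distrib]
  ring_nf

end QuasiClifford

theorem quasiClifford_dual_exceptional_eigenvalue_general
    {V : Type*} [AddCommGroup V] [Module ℝ V]
    (g : LinearMap.BilinForm ℝ V) (hsymm : ∀ x y, g x y = g y x) (hnd : g.Nondegenerate)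
    {m : ℕ} (μ₀ : ℝ) (μ : Fin m → ℝ) (J : Fin m → V →ₗ[ℝ] V)
    (hskew : ∀ i, ∀ x y : V, g (J i x) y = - g x (J i y))
    (R : V → V → V → V → ℝ)
    (hR : ∀ X Y Z W, R X Y Z W = μ₀ * R0 g X Y Z W + ∑ i, μ i * RJ g (J i) X Y Z W)
    (Jac : V → V →ₗ[ℝ] V)
    (hJac : ∀ X Y Z, g (Jac X Y) Z = R Y X X Z)
    (X Y : V) (hX : g X X ≠ 0) (hY : Jac X Y = (g X X * μ₀) • Y)
    (hli : LinearIndependent ℝ (Fin.cons X (fun i : Fin m => J i X) : Fin (m + 1) → V)) :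
    μ₀ * g Y X = 0 ∧ (∀ i, μ i * g Y (J i X) = 0) ∧
      Jac Y X = (g Y Y * μ₀) • X ∧
      ∃ lam : ℝ, Module.End.HasEigenvector (Jac Y) lam X := by
  have jacobi_eq (X Y : V) :
      Jac X Y = μ₀ • (g X X • Y - g Y X • X) - ∑ i, (3 * μ i * g Y (J i X)) • J i X :=
    quasiCliffordTensor_jacobi_eq hnd.1 hsymm hskew (fun Y Z => (hJac X Y Z).trans (hR ..)) Y
  have hdep : (μ₀ * g Y X) • X + ∑ i, (3 * μ i * g Y (J i X)) • J i X = 0 := by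
    linear_combination (norm := module) -(jacobi_eq X Y).symm.trans hY
  obtain ⟨hμ₀, hcoeff⟩ := hli.eq_zero_of_fin_cons_smul_add_sum hdep
  have hμ (i : Fin m) : μ i * g Y (J i X) = 0 := by simpa [mul_assoc] using hcoeff i
  have hsum_JY : ∑ i, (3 * μ i * g X (J i Y)) • J i Y = 0 :=
    Finset.sum_eq_zero fun i _ => by
      rw [← neg_neg (g X (J i Y)), ← hskew, hsymm, mul_neg, mul_assoc, hμ, mul_zero,
        neg_zero, zero_smul]
  have hjacobi_YX : Jac Y X = (g Y Y * μ₀) • X := by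
    rw [jacobi_eq, hsum_JY, hsymm X Y]
    linear_combination (norm := module) -(hμ₀ • Y)
  refine ⟨hμ₀, hμ, hjacobi_YX, g Y Y * μ₀, Module.End.mem_eigenspace_iff.mpr hjacobi_YX, ?_⟩
  rintro rfl
  exact hX (by simp)

/-- for a quasi-Clifford curvature tensor, a nonnull `X` and `Y` with
`𝒥_X(Y) = ε_X μ₀ Y`, if the family `(X, J₁X, …, J_mX)` is linearly independent then
`μ₀ g(Y,X) = 0`, `μᵢ g(Y,JᵢX) = 0`, and consequently `𝒥_Y(X) = ε_Y μ₀ X`, so `X`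
is an eigenvector of `𝒥_Y`. -/
theorem quasiClifford_dual_exceptional_eigenvalue
    {V : Type*} [AddCommGroup V] [Module ℝ V] [FiniteDimensional ℝ V]
    (g : LinearMap.BilinForm ℝ V) (hsymm : ∀ x y, g x y = g y x) (hnd : g.Nondegenerate)
    {m : ℕ} (μ₀ : ℝ) (μ c : Fin m → ℝ) (J : Fin m → V →ₗ[ℝ] V)
    (hskew : ∀ i, ∀ x y : V, g (J i x) y = - g x (J i y))
    (hhur : ∀ i j, J i ∘ₗ J j + J j ∘ₗ J i
      = ((if i = j then 2 * c i else 0 : ℝ) • LinearMap.id : V →ₗ[ℝ] V))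
    (R : V → V → V → V → ℝ)
    (hR : ∀ X Y Z W, R X Y Z W = μ₀ * R0 g X Y Z W + ∑ i, μ i * RJ g (J i) X Y Z W)
    (Jac : V → V →ₗ[ℝ] V)
    (hJac : ∀ X Y Z, g (Jac X Y) Z = R Y X X Z)
    (X Y : V) (hX : g X X ≠ 0) (hY : Jac X Y = (g X X * μ₀) • Y)
    (hli : LinearIndependent ℝ (Fin.cons X (fun i : Fin m => J i X) : Fin (m + 1) → V)) :
    μ₀ * g Y X = 0 ∧ (∀ i, μ i * g Y (J i X) = 0) ∧
      Jac Y X = (g Y Y * μ₀) • X ∧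
      ∃ lam : ℝ, Module.End.HasEigenvector (Jac Y) lam X :=
  quasiClifford_dual_exceptional_eigenvalue_general g hsymm hnd μ₀ μ J hskew R hR Jac hJac X Y hX hY
    hli
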